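/- If a set system F ⊆ 2^E is non-evasive (i.e., its decision-tree complexity c(F) is strictly less than |E|), then the number of sets of F of even cardinality equals the number of sets of F of odd cardinality; in particular |F| is even. -/

import Mathlib

/-- A binary decision tree: leaves hold answers, internal nodes query an element
(left subtree = answer NO, right subtree = answer YES). -/
inductive DTree (α : Type*) where
  | leaf : Bool → DTree α
  | node : α → DTree α → DTree α → DTree α

/-- Evaluate a decision tree on an input set (given by its characteristic function). -/
def DTree.eval {α : Type*} : DTree α → (α → Bool) → Bool
  | .leaf b, _ => b
  | .node e t0 t1, A => if A e then t1.eval A else t0.eval A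

/-- The depth (worst-case number of queries) of a decision tree. -/
def DTree.depth {α : Type*} : DTree α → ℕ
  | .leaf _ => 0
  | .node _ t0 t1 => max t0.depth t1.depth + 1

/-- The tree `T` decides membership in the set system `F`. -/
def Decides {α : Type*} [DecidableEq α] (F : Finset (Finset α)) (T : DTree α) : Prop :=
  ∀ A : Finset α, T.eval (fun e => decide (e ∈ A)) = decide (A ∈ F)

/-- The decision-tree (argument) complexity `c(F)` of a set system `F`. -/
noncomputable def dtComplexity (α : Type*) [DecidableEq α] (F : Finset (Finset α)) : ℕ :=
  sInf {d | ∃ T : DTree α, Decides F T ∧ T.depth = d}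

/-! A decision tree of depth `d` splits the cube `2^E` into subcubes, one per leaf, each of
dimension at least `|E| - d`, on which membership in `F` is constant. When `d < |E|` every
subcube has positive dimension and therefore contains equally many sets of even and of odd
cardinality, so `∑_{A ∈ F} (-1)^|A| = 0`. Formally this is an induction on the tree, tracking
the subcube `{A ∪ B | A ⊆ s}` of inputs still to be told apart. -/

open Finset

namespace Finset

theorem card_filter_even_eq_card_filter_odd_of_sum_neg_one_pow_eq_zero {ι : Type*}
    {s : Finset ι} {f : ι → ℕ} (h : ∑ i ∈ s, (-1 : ℤ) ^ f i = 0) :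
    #(s.filter fun i => Even (f i)) = #(s.filter fun i => Odd (f i)) := by
  have heven : ∀ i ∈ s.filter fun i => Even (f i), (-1 : ℤ) ^ f i = 1 :=
    fun i hi => (mem_filter.mp hi).2.neg_one_pow
  have hodd : ∀ i ∈ s.filter fun i => Odd (f i), (-1 : ℤ) ^ f i = -1 :=
    fun i hi => (mem_filter.mp hi).2.neg_one_pow
  rw [← sum_filter_add_sum_filter_not s fun i => Even (f i)] at h
  simp only [Nat.not_even_iff_odd] at h
  rw [sum_congr rfl heven, sum_congr rfl hodd] at h
  simp only [sum_const, smul_neg, nsmul_eq_mul, mul_one] at h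
  omega

end Finset

namespace DTree

variable {α : Type*} [DecidableEq α]

/-- Query the elements of `l` in turn, collecting the positive answers in `acc`, and apply `f`
to the collected set at the leaves. -/
def queryAll (f : Finset α → Bool) : List α → Finset α → DTree α
  | [], acc => .leaf (f acc)
  | x :: l, acc => .node x (queryAll f l acc) (queryAll f l (insert x acc))

theorem eval_queryAll (f : Finset α → Bool) :
    ∀ (l : List α) (acc A : Finset α),
      (queryAll f l acc).eval (fun e => decide (e ∈ A)) = f (acc ∪ A.filter (· ∈ l))
  | [], acc, A => by simp [queryAll, eval]
  | x :: l, acc, A => by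
    by_cases hx : x ∈ A
    · have hset : insert x acc ∪ A.filter (· ∈ l) = acc ∪ A.filter (· ∈ x :: l) := by
        ext y
        simp only [mem_union, mem_insert, mem_filter, List.mem_cons]
        grind
      simp only [queryAll, eval, hx, decide_true, if_true, eval_queryAll, hset]
    · have hset : A.filter (· ∈ l) = A.filter (· ∈ x :: l) := by
        ext y
        simp only [mem_filter, List.mem_cons]
        grind
      simp only [queryAll, eval, hx, decide_false, Bool.false_eq_true, if_false, eval_queryAll,
        hset]

theorem exists_decides [Fintype α] (F : Finset (Finset α)) : ∃ T : DTree α, Decides F T :=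
  ⟨queryAll (fun A => decide (A ∈ F)) univ.toList ∅, fun A => by
    rw [eval_queryAll, empty_union, filter_true_of_mem fun x _ => mem_toList.mpr (mem_univ x)]⟩

def signedCount (T : DTree α) (s B : Finset α) : ℤ :=
  ∑ A ∈ s.powerset, if T.eval (fun e => decide (e ∈ A ∪ B)) then (-1) ^ #A else 0

theorem signedCount_leaf_of_nonempty (b : Bool) {s : Finset α} (hs : s.Nonempty) (B : Finset α) :
    (leaf b).signedCount s B = 0 := by
  cases b <;> simp [signedCount, eval, sum_powerset_neg_one_pow_card_of_nonempty hs]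

theorem signedCount_node_of_notMem {e : α} {s : Finset α} (he : e ∉ s) (t₀ t₁ : DTree α)
    (B : Finset α) :
    (node e t₀ t₁).signedCount s B =
      if e ∈ B then t₁.signedCount s B else t₀.signedCount s B := by
  unfold signedCount
  split_ifs with heB
  all_goals
    refine sum_congr rfl fun A hA => ?_
    have heA : e ∉ A := fun h => he (mem_powerset.mp hA h)
    simp [eval, heA, heB]

theorem signedCount_node_of_mem {e : α} {s B : Finset α} (he : e ∈ s) (heB : e ∉ B)
    (t₀ t₁ : DTree α) :
    (node e t₀ t₁).signedCount s B =
      t₀.signedCount (s.erase e) B - t₁.signedCount (s.erase e) (insert e B) := by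
  unfold signedCount
  conv_lhs => rw [← insert_erase he]
  rw [sum_powerset_insert (notMem_erase e s), sub_eq_add_neg, ← sum_neg_distrib]
  congr 1
  all_goals
    refine sum_congr rfl fun A hA => ?_
    have heA : e ∉ A := fun h => notMem_erase e s (mem_powerset.mp hA h)
  · simp [eval, heA, heB]
  · have hunion : insert e A ∪ B = A ∪ insert e B := by
      rw [insert_union, union_insert]
    simp [eval, hunion, card_insert_of_notMem heA, pow_succ, apply_ite Neg.neg]

theorem signedCount_eq_zero_of_depth_lt :
    ∀ (T : DTree α) {s B : Finset α}, Disjoint s B → T.depth < #s → T.signedCount s B = 0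
  | leaf b, s, B, _, hd => signedCount_leaf_of_nonempty b (card_pos.mp hd) B
  | node e t₀ t₁, s, B, hsB, hd => by
    have hd' : max t₀.depth t₁.depth + 1 < #s := hd
    by_cases he : e ∈ s
    · have hcard : #(s.erase e) + 1 = #s := card_erase_add_one he
      have hsB' : Disjoint (s.erase e) B := disjoint_of_subset_left (erase_subset e s) hsB
      rw [signedCount_node_of_mem he (disjoint_left.mp hsB he),
        signedCount_eq_zero_of_depth_lt t₀ hsB' (by omega),
        signedCount_eq_zero_of_depth_lt t₁
          (disjoint_insert_right.mpr ⟨notMem_erase e s, hsB'⟩) (by omega), sub_zero]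
    · rw [signedCount_node_of_notMem he]
      split_ifs
      · exact signedCount_eq_zero_of_depth_lt t₁ hsB (by omega)
      · exact signedCount_eq_zero_of_depth_lt t₀ hsB (by omega)

end DTree

theorem exists_decides_depth_eq_dtComplexity {α : Type*} [Fintype α] [DecidableEq α]
    (F : Finset (Finset α)) : ∃ T : DTree α, Decides F T ∧ T.depth = dtComplexity α F :=
  let ⟨T, hT⟩ := DTree.exists_decides F
  Nat.sInf_mem (s := {d | ∃ T : DTree α, Decides F T ∧ T.depth = d}) ⟨T.depth, T, hT, rfl⟩

theorem Decides.sum_neg_one_pow_card_eq_zero {α : Type*} [Fintype α] [DecidableEq α]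
    {F : Finset (Finset α)} {T : DTree α} (hT : Decides F T) (hd : T.depth < Fintype.card α) :
    ∑ A ∈ F, (-1 : ℤ) ^ #A = 0 := by
  have hcount : T.signedCount univ ∅ = ∑ A ∈ F, (-1 : ℤ) ^ #A := by
    simp only [DTree.signedCount, union_empty, powerset_univ]
    simp only [hT _, decide_eq_true_eq]
    rw [sum_ite_mem, univ_inter]
  rw [← hcount]
  exact T.signedCount_eq_zero_of_depth_lt (disjoint_empty_right _) (by rwa [card_univ])

/-- If a set system `F ⊆ 2^E` is non-evasive (its decision-tree complexity is
strictly less than `|E|`), then `F` has as many members of even cardinality as of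
odd cardinality; in particular `|F|` is even. -/
theorem nonevasive_even_odd (α : Type*) [Fintype α] [DecidableEq α]
    (F : Finset (Finset α)) (h : dtComplexity α F < Fintype.card α) :
    (F.filter fun A => Even A.card).card = (F.filter fun A => Odd A.card).card ∧
      Even F.card := by
  obtain ⟨T, hT, hdepth⟩ := exists_decides_depth_eq_dtComplexity F
  have hcard := card_filter_even_eq_card_filter_odd_of_sum_neg_one_pow_eq_zero
    (hT.sum_neg_one_pow_card_eq_zero (hdepth ▸ h))
  refine ⟨hcard, ⟨#(F.filter fun A => Even A.card), ?_⟩⟩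
  have hsplit := card_filter_add_card_filter_not (s := F) (p := fun A => Even A.card)
  simp only [Nat.not_even_iff_odd] at hsplit
  omega
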